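/- arXiv:2410.03307 — 4 statements merged into one kernel-verified Lean document; each statement's English description precedes it below -/
import Mathlib

section
/- Let Φ satisfy the standing assumptions (continuous, C² on (0,∞), convex, Φ(0)=0, Φ'>0 on (0,∞)), let 0 ≤ μ⁻ < μ⁺, K > 0, and define Λ⁺(s) := ∫_{Φ⁻¹(K)}^{Φ⁻¹(s)} (Φ(σ) − K)₊ dσ for s ∈ [μ⁻, μ⁺]. Then (s − K)₊² / (2·Φ'(Φ⁻¹(μ⁺))) ≤ Λ⁺(s) ≤ (s − K)₊² / (2·Φ'(Φ⁻¹(K))) for all s ∈ [μ⁻, μ⁺]. -/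
open Set intervalIntegral

theorem stmt_5 (Φ Φ' Φ'' Ψ : ℝ → ℝ) (μm μp K : ℝ)
    (hΦc : ContinuousOn Φ (Set.Ici 0))
    (hΦ'd : ∀ s : ℝ, 0 < s → HasDerivAt Φ (Φ' s) s)
    (hΦ''d : ∀ s : ℝ, 0 < s → HasDerivAt Φ' (Φ'' s) s)
    (hΦ''c : ContinuousOn Φ'' (Set.Ioi 0))
    (hconv : ConvexOn ℝ (Set.Ici 0) Φ)
    (hΦ0 : Φ 0 = 0)
    (hΦ'pos : ∀ s : ℝ, 0 < s → 0 < Φ' s)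
    (hinv₁ : ∀ s : ℝ, 0 ≤ s → Ψ (Φ s) = s)
    (hinv₂ : ∀ σ : ℝ, 0 ≤ σ → 0 ≤ Ψ σ ∧ Φ (Ψ σ) = σ)
    (hμm : 0 ≤ μm) (hμ : μm < μp) (hK : 0 < K) :
    ∀ s ∈ Set.Icc μm μp,
      max (s - K) 0 ^ 2 / (2 * Φ' (Ψ μp)) ≤ (∫ σ in Ψ K..Ψ s, max (Φ σ - K) 0) ∧
      (∫ σ in Ψ K..Ψ s, max (Φ σ - K) 0) ≤ max (s - K) 0 ^ 2 / (2 * Φ' (Ψ K)) := by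
  -- Strict monotonicity of Φ on Ici 0
  have hΦsm : StrictMonoOn Φ (Set.Ici 0) := by
    apply strictMonoOn_of_deriv_pos (convex_Ici 0) hΦc
    intro x hx
    rw [interior_Ici] at hx
    rw [(hΦ'd x hx).deriv]
    exact hΦ'pos x hx
  have hΦmono : MonotoneOn Φ (Set.Ici 0) := hΦsm.monotoneOn
  -- Monotonicity of Φ' on Ioi 0
  have hΦ'mono : MonotoneOn Φ' (Set.Ioi 0) := by
    have hconv' : ConvexOn ℝ (Set.Ioi 0) Φ :=
      hconv.subset Ioi_subset_Ici_self (convex_Ioi 0)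
    have := hconv'.monotoneOn_deriv (fun x hx => (hΦ'd x hx).differentiableAt)
    intro x hx y hy hxy
    have hdx := (hΦ'd x hx).deriv
    have hdy := (hΦ'd y hy).deriv
    rw [← hdx, ← hdy]
    exact this hx hy hxy
  -- Ψ facts
  have hΨmono : ∀ a b : ℝ, 0 ≤ a → a ≤ b → Ψ a ≤ Ψ b := by
    intro a b ha hab
    by_contra h
    push_neg at h
    have h1 := (hinv₂ a ha).1
    have h2 := (hinv₂ b (ha.trans hab)).1
    have := hΦsm h2 h1 h
    rw [(hinv₂ a ha).2, (hinv₂ b (ha.trans hab)).2] at this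
    linarith
  have hΨK0 : 0 ≤ Ψ K := (hinv₂ K hK.le).1
  have hΦΨK : Φ (Ψ K) = K := (hinv₂ K hK.le).2
  have hΨKpos : 0 < Ψ K := by
    rcases hΨK0.lt_or_eq with h | h
    · exact h
    · exfalso; rw [← h, hΦ0] at hΦΨK; linarith
  have hμp0 : 0 < μp := lt_of_le_of_lt hμm hμ
  have hΨμp0 : 0 ≤ Ψ μp := (hinv₂ μp hμp0.le).1
  -- continuity of integrand pieces on Ioi 0
  have hgc : ContinuousOn (fun σ => Φ σ - K) (Set.Ioi 0) := fun σ hσ =>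
    ((hΦ'd σ hσ).continuousAt.sub continuousAt_const).continuousWithinAt
  intro s hs
  have hs0 : 0 ≤ s := hμm.trans hs.1
  have hΨs0 : 0 ≤ Ψ s := (hinv₂ s hs0).1
  have hΦΨs : Φ (Ψ s) = s := (hinv₂ s hs0).2
  rcases le_or_gt s K with hsK | hsK
  · -- trivial case: s ≤ K
    have hmax : max (s - K) 0 = 0 := max_eq_right (by linarith)
    have hint : (∫ σ in Ψ K..Ψ s, max (Φ σ - K) 0) = 0 := by
      rw [← intervalIntegral.integral_zero (a := Ψ K) (b := Ψ s) (E := ℝ)]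
      apply intervalIntegral.integral_congr
      intro σ hσ
      have hΨsK : Ψ s ≤ Ψ K := hΨmono s K hs0 hsK
      rw [Set.uIcc_of_ge hΨsK] at hσ
      have hσ0 : 0 ≤ σ := hΨs0.trans hσ.1
      have : Φ σ ≤ K := by
        calc Φ σ ≤ Φ (Ψ K) := hΦmono hσ0 hΨK0 hσ.2
        _ = K := hΦΨK
      simp [max_eq_right, sub_nonpos.mpr this]
    rw [hint, hmax]
    norm_num
  · -- main case: K < s
    set a := Ψ K with ha_def
    set b := Ψ s with hb_def
    have hab : a ≤ b := hΨmono K s hK.le hsK.le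
    have hbμp : b ≤ Ψ μp := hΨmono s μp hs0 hs.2
    have hmax : max (s - K) 0 = s - K := max_eq_left (by linarith)
    have hIccsub : Set.Icc a b ⊆ Set.Ioi 0 := fun x hx => lt_of_lt_of_le hΨKpos hx.1
    -- rewrite the integral
    have hint : (∫ σ in a..b, max (Φ σ - K) 0) = ∫ σ in a..b, (Φ σ - K) := by
      apply intervalIntegral.integral_congr
      intro σ hσ
      rw [Set.uIcc_of_le hab] at hσ
      have : K ≤ Φ σ := by
        calc K = Φ a := hΦΨK.symm
        _ ≤ Φ σ := hΦmono hΨK0 (hΨK0.trans hσ.1) hσ.1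
      simp [max_eq_left, sub_nonneg.mpr this]
    -- derivative of F c at points of Icc a b
    have key : ∀ c : ℝ, 0 < c → ∀ u ∈ Set.Icc a b,
        HasDerivAt (fun u => (∫ σ in a..u, (Φ σ - K)) - (Φ u - K) ^ 2 / (2 * c))
          ((Φ u - K) * (1 - Φ' u / c)) u := by
      intro c hc u hu
      have hu0 : 0 < u := hIccsub hu
      have hInt : IntervalIntegrable (fun σ => Φ σ - K) MeasureTheory.volume a u := by
        apply ContinuousOn.intervalIntegrable
        apply hgc.mono
        intro x hx
        rw [Set.uIcc_of_le hu.1] at hx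
        exact lt_of_lt_of_le hΨKpos hx.1
      have hmeas : StronglyMeasurableAtFilter (fun σ => Φ σ - K) (nhds u) :=
        hgc.stronglyMeasurableAtFilter isOpen_Ioi _ hu0
      have h1 : HasDerivAt (fun u => ∫ σ in a..u, (Φ σ - K)) (Φ u - K) u :=
        intervalIntegral.integral_hasDerivAt_right hInt hmeas
          ((hΦ'd u hu0).continuousAt.sub continuousAt_const)
      have h2 : HasDerivAt (fun u => (Φ u - K) ^ 2 / (2 * c))
          ((Φ u - K) * Φ' u / c) u := by
        have := (((hΦ'd u hu0).sub_const K).pow 2).div_const (2 * c)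
        refine this.congr_deriv ?_
        field_simp
        ring
      refine (h1.sub h2).congr_deriv ?_
      field_simp
    -- general bound lemma
    have hFa : ∀ c : ℝ, (∫ σ in a..a, (Φ σ - K)) - (Φ a - K) ^ 2 / (2 * c) = 0 := by
      intro c
      rw [intervalIntegral.integral_same, hΦΨK]
      simp
    constructor
    · -- lower bound, c = Φ' (Ψ μp)
      have hΨμppos : 0 < Ψ μp := lt_of_lt_of_le hΨKpos (hΨmono K μp hK.le (by linarith [hs.2]))
      set c := Φ' (Ψ μp) with hc_def
      have hc : 0 < c := hΦ'pos _ hΨμppos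
      have hmonoF : MonotoneOn (fun u => (∫ σ in a..u, (Φ σ - K)) - (Φ u - K) ^ 2 / (2 * c))
          (Set.Icc a b) := by
        apply monotoneOn_of_deriv_nonneg (convex_Icc a b)
        · exact fun u hu => ((key c hc u hu).continuousAt).continuousWithinAt
        · intro u hu
          rw [interior_Icc] at hu
          exact ((key c hc u (Set.mem_Icc_of_Ioo hu)).differentiableAt).differentiableWithinAt
        · intro u hu
          rw [interior_Icc] at hu
          rw [(key c hc u (Set.mem_Icc_of_Ioo hu)).deriv]
          have hu0 : 0 < u := lt_of_lt_of_le hΨKpos hu.1.le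
          have hΦu : K ≤ Φ u := by
            calc K = Φ a := hΦΨK.symm
            _ ≤ Φ u := hΦmono hΨK0 hu0.le hu.1.le
          have hΦ'u : Φ' u ≤ c := hΦ'mono hu0 hΨμppos (hu.2.le.trans hbμp)
          have : Φ' u / c ≤ 1 := (div_le_one hc).mpr hΦ'u
          nlinarith
      have := hmonoF (Set.left_mem_Icc.mpr hab) (Set.right_mem_Icc.mpr hab) hab
      beta_reduce at this
      rw [hFa c] at this
      rw [hint, hmax]
      rw [hΦΨs] at this
      linarith
    · -- upper bound, c = Φ' a
      set c := Φ' a with hc_def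
      have hc : 0 < c := hΦ'pos _ hΨKpos
      have hantiF : AntitoneOn (fun u => (∫ σ in a..u, (Φ σ - K)) - (Φ u - K) ^ 2 / (2 * c))
          (Set.Icc a b) := by
        apply antitoneOn_of_deriv_nonpos (convex_Icc a b)
        · exact fun u hu => ((key c hc u hu).continuousAt).continuousWithinAt
        · intro u hu
          rw [interior_Icc] at hu
          exact ((key c hc u (Set.mem_Icc_of_Ioo hu)).differentiableAt).differentiableWithinAt
        · intro u hu
          rw [interior_Icc] at hu
          rw [(key c hc u (Set.mem_Icc_of_Ioo hu)).deriv]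
          have hu0 : 0 < u := lt_of_lt_of_le hΨKpos hu.1.le
          have hΦu : K ≤ Φ u := by
            calc K = Φ a := hΦΨK.symm
            _ ≤ Φ u := hΦmono hΨK0 hu0.le hu.1.le
          have hΦ'u : c ≤ Φ' u := hΦ'mono hΨKpos hu0 hu.1.le
          have : 1 ≤ Φ' u / c := (one_le_div hc).mpr hΦ'u
          nlinarith
      have := hantiF (Set.left_mem_Icc.mpr hab) (Set.right_mem_Icc.mpr hab) hab
      beta_reduce at this
      rw [hFa c] at this
      rw [hint, hmax]
      rw [hΦΨs] at this
      linarith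
end

section
/- Let Φ satisfy the standing assumptions, let 0 ≤ μ⁻ < μ⁺, K > 0, and define Λ⁻(s) := −∫_{Φ⁻¹(K)}^{Φ⁻¹(s)} (Φ(σ) − K)₋ dσ for s ∈ [μ⁻, μ⁺]. Then (s − K)₋² / (2·Φ'(Φ⁻¹(K))) ≤ Λ⁻(s) ≤ (Φ⁻¹(K)/K)·(s − K)₋² for all s ∈ [μ⁻, μ⁺]. Moreover, if μ⁻ > 0, then additionally Λ⁻(s) ≤ (s − K)₋² / (2·Φ'(Φ⁻¹(μ⁻))) for all s ∈ [μ⁻, μ⁺]. -/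
open Set intervalIntegral

private lemma stmt6_integral_linear (p q a b : ℝ) :
    ∫ σ in a..b, (p + q * σ) = p * (b - a) + q * (b ^ 2 - a ^ 2) / 2 := by
  rw [intervalIntegral.integral_add intervalIntegrable_const
      (((by exact continuous_const.mul continuous_id') : Continuous fun σ : ℝ => q * σ).intervalIntegrable _ _),
    intervalIntegral.integral_const, intervalIntegral.integral_const_mul, integral_id,
    smul_eq_mul]
  ring

private lemma stmt6_key (Φ Φd : ℝ → ℝ) (K s : ℝ)
    (hΦc : ContinuousOn Φ (Set.Ici 0))
    (hΦ'd : ∀ x : ℝ, 0 < x → HasDerivAt Φ (Φd x) x)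
    (hconv : ConvexOn ℝ (Set.Ici 0) Φ)
    (hΦ0 : Φ 0 = 0)
    (hΦ'pos : ∀ x : ℝ, 0 < x → 0 < Φd x)
    (a b : ℝ) (ha0 : 0 ≤ a) (hab : a < b)
    (hΦa : Φ a = s) (hΦb : Φ b = K) (hK : 0 < K) (hs0 : 0 ≤ s) (hsK : s < K) :
    (K - s) ^ 2 / (2 * Φd b) ≤ (∫ σ in a..b, (K - Φ σ)) ∧
    (∫ σ in a..b, (K - Φ σ)) ≤ (b / K) * (K - s) ^ 2 ∧
    (∀ c, 0 < c → c ≤ a → (∫ σ in a..b, (K - Φ σ)) ≤ (K - s) ^ 2 / (2 * Φd c)) := by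
  have hb0 : 0 < b := lt_of_le_of_lt ha0 hab
  have hba : (0:ℝ) < b - a := by linarith
  have hmono : StrictMonoOn Φ (Set.Ici 0) := by
    apply strictMonoOn_of_deriv_pos (convex_Ici 0) hΦc
    intro x hx
    rw [interior_Ici] at hx
    rw [(hΦ'd x hx).deriv]
    exact hΦ'pos x hx
  have hsubset : Set.Icc a b ⊆ Set.Ici 0 := fun x hx => le_trans ha0 hx.1
  have hInt : IntervalIntegrable (fun σ => K - Φ σ) MeasureTheory.volume a b := by
    apply ContinuousOn.intervalIntegrable
    apply (continuousOn_const.sub hΦc).mono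
    rw [Set.uIcc_of_le hab.le]
    exact hsubset
  have hD : (0:ℝ) < K - s := by linarith
  have hbane : b - a ≠ 0 := ne_of_gt hba
  -- slope bound at b : K - s ≤ Φd b * (b - a)
  have hslopeb : K - s ≤ Φd b * (b - a) := by
    have h := hconv.slope_le_of_hasDerivAt (Set.mem_Ici.2 ha0) (Set.mem_Ici.2 hb0.le) hab
      (hΦ'd b hb0)
    rw [slope_def_field, hΦa, hΦb, div_le_iff₀ hba] at h
    linarith
  constructor
  · -- lower bound
    set p : ℝ := b * (K - s) / (b - a) with hp
    set q : ℝ := -((K - s) / (b - a)) with hq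
    have hpt : ∀ σ ∈ Set.Icc a b, p + q * σ ≤ K - Φ σ := by
      intro σ hσ
      have hw1 : (0:ℝ) ≤ (b - σ) / (b - a) := div_nonneg (by linarith [hσ.2]) hba.le
      have hw2 : (0:ℝ) ≤ (σ - a) / (b - a) := div_nonneg (by linarith [hσ.1]) hba.le
      have hw3 : (b - σ) / (b - a) + (σ - a) / (b - a) = 1 := by field_simp; ring
      have hcomb := hconv.2 (Set.mem_Ici.2 ha0) (Set.mem_Ici.2 hb0.le) hw1 hw2 hw3
      simp only [smul_eq_mul] at hcomb
      have harg : (b - σ) / (b - a) * a + (σ - a) / (b - a) * b = σ := by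
        field_simp
        ring
      rw [harg, hΦa, hΦb] at hcomb
      have heq : p + q * σ = K - ((b - σ) / (b - a) * s + (σ - a) / (b - a) * K) := by
        rw [hp, hq]; field_simp; ring
      rw [heq]
      linarith
    have h1 : (∫ σ in a..b, (p + q * σ)) ≤ ∫ σ in a..b, (K - Φ σ) := by
      apply intervalIntegral.integral_mono_on hab.le _ hInt hpt
      exact (((continuous_const.add (continuous_const.mul continuous_id')) :
        Continuous fun σ : ℝ => p + q * σ)).intervalIntegrable _ _
    rw [stmt6_integral_linear] at h1
    have hval : p * (b - a) + q * (b ^ 2 - a ^ 2) / 2 = (K - s) * (b - a) / 2 := by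
      rw [hp, hq]; field_simp; ring
    rw [hval] at h1
    have hΦdb : 0 < Φd b := hΦ'pos b hb0
    rw [div_le_iff₀ (by positivity)]
    nlinarith [mul_le_mul_of_nonneg_left hslopeb hD.le]
  constructor
  · -- middle upper bound
    have hpt : ∀ σ ∈ Set.Icc a b, K - Φ σ ≤ K - s := by
      intro σ hσ
      have : Φ a ≤ Φ σ := hmono.monotoneOn (Set.mem_Ici.2 ha0) (hsubset hσ) hσ.1
      rw [hΦa] at this
      linarith
    have h1 : (∫ σ in a..b, (K - Φ σ)) ≤ ∫ σ in a..b, (K - s : ℝ) :=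
      intervalIntegral.integral_mono_on hab.le hInt (intervalIntegrable_const) hpt
    rw [intervalIntegral.integral_const, smul_eq_mul] at h1
    -- convexity at 0 and b : s ≤ (a / b) * K
    have hsec : s ≤ a / b * K := by
      have hw1 : (0:ℝ) ≤ 1 - a / b := by
        rw [sub_nonneg, div_le_one hb0]; exact hab.le
      have hw2 : (0:ℝ) ≤ a / b := div_nonneg ha0 hb0.le
      have hcomb := hconv.2 (Set.mem_Ici.2 (le_refl (0:ℝ))) (Set.mem_Ici.2 hb0.le) hw1 hw2
        (by ring)
      simp only [smul_eq_mul, mul_zero, zero_add] at hcomb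
      have harg : (a / b) * b = a := by field_simp
      rw [harg, hΦ0, hΦa, hΦb, mul_zero, zero_add] at hcomb
      linarith
    have hsb : s * b ≤ a * K := by
      rw [div_mul_eq_mul_div, le_div_iff₀ hb0] at hsec
      linarith
    rw [div_mul_eq_mul_div, le_div_iff₀ hK]
    nlinarith [mul_le_mul_of_nonneg_right hsb hD.le]
  · -- upper bound with c
    intro c hc0 hca
    have ha0' : 0 < a := lt_of_lt_of_le hc0 hca
    have hΦdc : 0 < Φd c := hΦ'pos c hc0
    -- Φd c ≤ Φd a
    have hmono' : Φd c ≤ Φd a := by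
      rcases eq_or_lt_of_le hca with rfl | hca'
      · exact le_refl _
      · have h1 := hconv.le_slope_of_hasDerivAt (Set.mem_Ici.2 hc0.le) (Set.mem_Ici.2 ha0)
          hca' (hΦ'd c hc0)
        have h2 := hconv.slope_le_of_hasDerivAt (Set.mem_Ici.2 hc0.le) (Set.mem_Ici.2 ha0)
          hca' (hΦ'd a ha0')
        exact le_trans h1 h2
    -- pointwise : K - Φ σ ≤ (K - s + Φd c * a) + (- Φd c) * σ
    have hpt : ∀ σ ∈ Set.Icc a b, K - Φ σ ≤ (K - s + Φd c * a) + (-(Φd c)) * σ := by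
      intro σ hσ
      have hkey : s + Φd c * (σ - a) ≤ Φ σ := by
        rcases eq_or_lt_of_le hσ.1 with rfl | haσ
        · rw [hΦa]; ring_nf; simp
        · have h1 := hconv.le_slope_of_hasDerivAt (Set.mem_Ici.2 ha0) (hsubset hσ)
            haσ (hΦ'd a ha0')
          rw [slope_def_field, hΦa, le_div_iff₀ (by linarith)] at h1
          nlinarith [mul_le_mul_of_nonneg_right hmono' (by linarith : (0:ℝ) ≤ σ - a)]
      nlinarith
    have h1 : (∫ σ in a..b, (K - Φ σ)) ≤ ∫ σ in a..b, ((K - s + Φd c * a) + (-(Φd c)) * σ) := by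
      apply intervalIntegral.integral_mono_on hab.le hInt _ hpt
      exact (((continuous_const.add (continuous_const.mul continuous_id')) :
        Continuous fun σ : ℝ => (K - s + Φd c * a) + (-(Φd c)) * σ)).intervalIntegrable _ _
    rw [stmt6_integral_linear] at h1
    rw [le_div_iff₀ (by positivity)]
    nlinarith [sq_nonneg (K - s - Φd c * (b - a))]

theorem stmt_6 (Φ Φ' Φ'' Ψ : ℝ → ℝ) (μm μp K : ℝ)
    (hΦc : ContinuousOn Φ (Set.Ici 0))
    (hΦ'd : ∀ s : ℝ, 0 < s → HasDerivAt Φ (Φ' s) s)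
    (hΦ''d : ∀ s : ℝ, 0 < s → HasDerivAt Φ' (Φ'' s) s)
    (hΦ''c : ContinuousOn Φ'' (Set.Ioi 0))
    (hconv : ConvexOn ℝ (Set.Ici 0) Φ)
    (hΦ0 : Φ 0 = 0)
    (hΦ'pos : ∀ s : ℝ, 0 < s → 0 < Φ' s)
    (hinv₁ : ∀ s : ℝ, 0 ≤ s → Ψ (Φ s) = s)
    (hinv₂ : ∀ σ : ℝ, 0 ≤ σ → 0 ≤ Ψ σ ∧ Φ (Ψ σ) = σ)
    (hμm : 0 ≤ μm) (hμ : μm < μp) (hK : 0 < K) :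
    (∀ s ∈ Set.Icc μm μp,
      max (K - s) 0 ^ 2 / (2 * Φ' (Ψ K)) ≤ -(∫ σ in Ψ K..Ψ s, max (K - Φ σ) 0) ∧
      -(∫ σ in Ψ K..Ψ s, max (K - Φ σ) 0) ≤ (Ψ K / K) * max (K - s) 0 ^ 2) ∧
    (0 < μm → ∀ s ∈ Set.Icc μm μp,
      -(∫ σ in Ψ K..Ψ s, max (K - Φ σ) 0) ≤ max (K - s) 0 ^ 2 / (2 * Φ' (Ψ μm))) := by
  obtain ⟨hΨK0, hΦΨK⟩ := hinv₂ K hK.le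
  have hmono : StrictMonoOn Φ (Set.Ici 0) := by
    apply strictMonoOn_of_deriv_pos (convex_Ici 0) hΦc
    intro x hx
    rw [interior_Ici] at hx
    rw [(hΦ'd x hx).deriv]
    exact hΦ'pos x hx
  -- basic facts per s
  have hfacts : ∀ s ∈ Set.Icc μm μp, 0 ≤ s ∧ 0 ≤ Ψ s ∧ Φ (Ψ s) = s := by
    intro s hs
    have hs0 : 0 ≤ s := le_trans hμm hs.1
    obtain ⟨h1, h2⟩ := hinv₂ s hs0
    exact ⟨hs0, h1, h2⟩
  -- the case s ≥ K : both sides are 0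
  have hgeK : ∀ s ∈ Set.Icc μm μp, K ≤ s →
      (∫ σ in Ψ K..Ψ s, max (K - Φ σ) 0) = 0 ∧ max (K - s) 0 = 0 := by
    intro s hs hKs
    obtain ⟨hs0, hΨs0, hΦΨs⟩ := hfacts s hs
    have hba : Ψ K ≤ Ψ s := by
      by_contra h
      push_neg at h
      have := hmono (Set.mem_Ici.2 hΨs0) (Set.mem_Ici.2 hΨK0) h
      rw [hΦΨK, hΦΨs] at this
      linarith
    constructor
    · have : ∀ σ ∈ Set.uIcc (Ψ K) (Ψ s), max (K - Φ σ) 0 = (0:ℝ) := by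
        intro σ hσ
        rw [Set.uIcc_of_le hba] at hσ
        have h0σ : 0 ≤ σ := le_trans hΨK0 hσ.1
        have : Φ (Ψ K) ≤ Φ σ := hmono.monotoneOn (Set.mem_Ici.2 hΨK0) (Set.mem_Ici.2 h0σ) hσ.1
        rw [hΦΨK] at this
        exact max_eq_right (by linarith)
      rw [intervalIntegral.integral_congr this]
      simp
    · exact max_eq_right (by linarith)
  -- the case s < K : rewrite the integral
  have hltK : ∀ s ∈ Set.Icc μm μp, s < K →
      Ψ s < Ψ K ∧
      -(∫ σ in Ψ K..Ψ s, max (K - Φ σ) 0) = ∫ σ in Ψ s..Ψ K, (K - Φ σ) := by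
    intro s hs hsK
    obtain ⟨hs0, hΨs0, hΦΨs⟩ := hfacts s hs
    have hab : Ψ s < Ψ K := by
      by_contra h
      push_neg at h
      have := hmono.monotoneOn (Set.mem_Ici.2 hΨK0) (Set.mem_Ici.2 hΨs0) h
      rw [hΦΨK, hΦΨs] at this
      linarith
    refine ⟨hab, ?_⟩
    rw [intervalIntegral.integral_symm, neg_neg]
    apply intervalIntegral.integral_congr
    intro σ hσ
    rw [Set.uIcc_of_le hab.le] at hσ
    have h0σ : 0 ≤ σ := le_trans hΨs0 hσ.1
    have : Φ σ ≤ Φ (Ψ K) := hmono.monotoneOn (Set.mem_Ici.2 h0σ) (Set.mem_Ici.2 hΨK0) hσ.2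
    rw [hΦΨK] at this
    exact max_eq_left (by linarith)
  constructor
  · intro s hs
    obtain ⟨hs0, hΨs0, hΦΨs⟩ := hfacts s hs
    rcases lt_or_ge s K with hsK | hKs
    · obtain ⟨hab, hIeq⟩ := hltK s hs hsK
      have hmax : max (K - s) 0 = K - s := max_eq_left (by linarith)
      obtain ⟨hlow, hmid, _⟩ := stmt6_key Φ Φ' K s hΦc hΦ'd hconv hΦ0 hΦ'pos
        (Ψ s) (Ψ K) hΨs0 hab hΦΨs hΦΨK hK hs0 hsK
      rw [hIeq, hmax]
      exact ⟨hlow, by rw [div_mul_eq_mul_div, mul_comm] at hmid ⊢; exact hmid⟩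
    · obtain ⟨hI0, hmax⟩ := hgeK s hs hKs
      rw [hI0, hmax]
      norm_num
  · intro hμm0 s hs
    obtain ⟨hs0, hΨs0, hΦΨs⟩ := hfacts s hs
    obtain ⟨hΨμ0, hΦΨμ⟩ := hinv₂ μm hμm
    have hΨμpos : 0 < Ψ μm := by
      rcases eq_or_lt_of_le hΨμ0 with h | h
      · exfalso; rw [← h, hΦ0] at hΦΨμ; linarith
      · exact h
    rcases lt_or_ge s K with hsK | hKs
    · obtain ⟨hab, hIeq⟩ := hltK s hs hsK
      have hmax : max (K - s) 0 = K - s := max_eq_left (by linarith)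
      obtain ⟨_, _, hup⟩ := stmt6_key Φ Φ' K s hΦc hΦ'd hconv hΦ0 hΦ'pos
        (Ψ s) (Ψ K) hΨs0 hab hΦΨs hΦΨK hK hs0 hsK
      have hca : Ψ μm ≤ Ψ s := by
        by_contra h
        push_neg at h
        have := hmono (Set.mem_Ici.2 hΨs0) (Set.mem_Ici.2 hΨμ0) h
        rw [hΦΨμ, hΦΨs] at this
        linarith [hs.1]
      rw [hIeq, hmax]
      exact hup (Ψ μm) hΨμpos hca
    · obtain ⟨hI0, hmax⟩ := hgeK s hs hKs
      rw [hI0, hmax]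
      norm_num
end

section
/- Let Φ satisfy the standing assumptions (continuous on [0,∞), C² on (0,∞), convex, Φ(0)=0, Φ'>0 on (0,∞), and s·Φ''(s) ≤ C_Φ·Φ'(s) on (0,s₀]). If there exist s₀ > 0 and q > 0 such that ∫₀^{s₀} 1/(Φ'(s))^q ds < ∞, then Φ⁻¹ : [0, Φ(s₀)] → ℝ is Hölder continuous with exponent β = q/(q+1). -/
open Set MeasureTheory

/-- Part (i) of the Remark after Corollary 1.3: if `1/(Φ')^q` is integrable near
`0`, then `Φ⁻¹` is Hölder continuous with exponent `q/(q+1)` on `[0, Φ(s₀)]`. -/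
theorem stmt_15 (Φ Φ' Φ'' Ψ : ℝ → ℝ) (C_Φ s₀' : ℝ)
    (hΦc : ContinuousOn Φ (Set.Ici 0))
    (hΦ'd : ∀ s : ℝ, 0 < s → HasDerivAt Φ (Φ' s) s)
    (hΦ''d : ∀ s : ℝ, 0 < s → HasDerivAt Φ' (Φ'' s) s)
    (hΦ''c : ContinuousOn Φ'' (Set.Ioi 0))
    (hconv : ConvexOn ℝ (Set.Ici 0) Φ)
    (hΦ0 : Φ 0 = 0)
    (hΦ'pos : ∀ s : ℝ, 0 < s → 0 < Φ' s)
    (hCΦ : 0 < C_Φ) (hs₀' : s₀' ∈ Set.Ioc (0:ℝ) 1)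
    (hstruct : ∀ s ∈ Set.Ioc (0:ℝ) s₀', s * Φ'' s ≤ C_Φ * Φ' s)
    (hinv₁ : ∀ s : ℝ, 0 ≤ s → Ψ (Φ s) = s)
    (hinv₂ : ∀ σ : ℝ, 0 ≤ σ → 0 ≤ Ψ σ ∧ Φ (Ψ σ) = σ)
    (s₀ q : ℝ) (hs₀ : 0 < s₀) (hq : 0 < q)
    (hint : IntegrableOn (fun s => 1 / Φ' s ^ q) (Set.Ioc 0 s₀)) :
    ∃ C : ℝ, 0 < C ∧ ∀ a ∈ Set.Icc 0 (Φ s₀), ∀ b ∈ Set.Icc 0 (Φ s₀),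
      |Ψ a - Ψ b| ≤ C * |a - b| ^ (q / (q + 1)) := by
  have hq1 : (0:ℝ) < q + 1 := by linarith
  -- derivative of Φ on Ioi 0
  have hderivΦ : ∀ x ∈ Set.Ioi (0:ℝ), deriv Φ x = Φ' x := fun x hx => (hΦ'd x hx).deriv
  -- Φ is strictly monotone on [0,∞)
  have hmono : StrictMonoOn Φ (Set.Ici 0) := by
    apply strictMonoOn_of_deriv_pos (convex_Ici 0) hΦc
    intro x hx
    rw [interior_Ici] at hx
    rw [hderivΦ x hx]
    exact hΦ'pos x hx
  -- Φ' is monotone on (0,∞)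
  have hΦ'mono : ∀ u v : ℝ, 0 < u → u ≤ v → Φ' u ≤ Φ' v := by
    intro u v hu huv
    have hv : (0:ℝ) < v := lt_of_lt_of_le hu huv
    have hc : ConvexOn ℝ (Set.Ioi (0:ℝ)) Φ :=
      hconv.subset Set.Ioi_subset_Ici_self (convex_Ioi 0)
    have := hc.monotoneOn_deriv (fun x hx => (hΦ'd x hx).differentiableAt) hu hv huv
    rwa [hderivΦ u hu, hderivΦ v hv] at this
  -- Φ' is continuous on (0,∞)
  have hΦ'cont : ContinuousOn Φ' (Set.Ioi 0) :=
    fun s hs => (hΦ''d s hs).continuousAt.continuousWithinAt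
  -- nonnegativity of the integrand
  have hgnn : ∀ s : ℝ, 0 < s → 0 ≤ 1 / Φ' s ^ q := fun s hs =>
    div_nonneg zero_le_one (Real.rpow_nonneg (hΦ'pos s hs).le q)
  set M := ∫ s in Set.Ioc (0:ℝ) s₀, 1 / Φ' s ^ q with hMdef
  have hM0 : 0 ≤ M :=
    setIntegral_nonneg measurableSet_Ioc (fun s hs => hgnn s hs.1)
  refine ⟨1 + M, by linarith, ?_⟩
  -- key one-sided estimate
  have key : ∀ a ∈ Set.Icc 0 (Φ s₀), ∀ b ∈ Set.Icc 0 (Φ s₀), b ≤ a →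
      Ψ a - Ψ b ≤ (1 + M) * (a - b) ^ (q / (q + 1)) := by
    intro a ha b hb hba
    rcases eq_or_lt_of_le hba with rfl | hlt
    · simp [Real.zero_rpow (by positivity : q / (q+1) ≠ 0)]
    set d := a - b with hd
    have hd0 : 0 < d := by simp only [hd]; linarith
    obtain ⟨hx0, hΦx⟩ := hinv₂ b hb.1
    obtain ⟨hy0, hΦy⟩ := hinv₂ a ha.1
    set x := Ψ b
    set y := Ψ a
    have hxy : x < y :=
      (hmono.lt_iff_lt (Set.mem_Ici.mpr hx0) (Set.mem_Ici.mpr hy0)).mp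
        (by rw [hΦx, hΦy]; exact hlt)
    have hys₀ : y ≤ s₀ :=
      (hmono.le_iff_le (Set.mem_Ici.mpr hy0) (Set.mem_Ici.mpr hs₀.le)).mp
        (by rw [hΦy]; exact ha.2)
    have hsubset : Set.Ioc x y ⊆ Set.Ioc (0:ℝ) s₀ := Set.Ioc_subset_Ioc hx0 hys₀
    have hpos_mem : ∀ s ∈ Set.Ioc x y, (0:ℝ) < s := fun s hs => lt_of_le_of_lt hx0 hs.1
    -- integrability of 1/Φ'^q on (x,y]
    have hgint : IntegrableOn (fun s => 1 / Φ' s ^ q) (Set.Ioc x y) := hint.mono_set hsubset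
    -- integrability of Φ' on (x,y]
    have hΦ'int : IntegrableOn Φ' (Set.Ioc x y) := by
      have haesm : AEStronglyMeasurable Φ' (volume.restrict (Set.Ioc x y)) :=
        (hΦ'cont.mono (fun s hs => hpos_mem s hs)).aestronglyMeasurable measurableSet_Ioc
      refine Integrable.mono' (g := fun _ => Φ' y)
        (integrableOn_const measure_Ioc_lt_top.ne enorm_ne_top) haesm ?_
      filter_upwards [ae_restrict_mem measurableSet_Ioc] with s hs
      rw [Real.norm_eq_abs, abs_of_pos (hΦ'pos s (hpos_mem s hs))]
      exact hΦ'mono s y (hpos_mem s hs) hs.2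
    -- FTC : ∫_{(x,y]} Φ' = a - b
    have hFTC : ∫ s in Set.Ioc x y, Φ' s = d := by
      have h1 : ∫ s in x..y, Φ' s = Φ y - Φ x := by
        apply intervalIntegral.integral_eq_sub_of_hasDeriv_right_of_le hxy.le
          (hΦc.mono (fun s hs => le_trans hx0 hs.1))
          (fun s hs => (hΦ'd s (lt_of_le_of_lt hx0 hs.1)).hasDerivWithinAt)
        exact (intervalIntegrable_iff_integrableOn_Ioc_of_le hxy.le).2 hΦ'int
      rw [intervalIntegral.integral_of_le hxy.le] at h1
      rw [h1, hΦx, hΦy]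
    -- choose λ = d^(1/(q+1))
    set lam := d ^ (1 / (q + 1)) with hlam
    have hlam0 : 0 < lam := Real.rpow_pos_of_pos hd0 _
    -- pointwise inequality
    have hpt : ∀ s ∈ Set.Ioc x y,
        (1:ℝ) ≤ Φ' s / lam + lam ^ q * (1 / Φ' s ^ q) := by
      intro s hs
      have hsp : 0 < Φ' s := hΦ'pos s (hpos_mem s hs)
      rcases le_or_gt lam (Φ' s) with h | h
      · have h1 : (1:ℝ) ≤ Φ' s / lam := (one_le_div hlam0).2 h
        have h2 : 0 ≤ lam ^ q * (1 / Φ' s ^ q) :=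
          mul_nonneg (Real.rpow_nonneg hlam0.le q) (hgnn s (hpos_mem s hs))
        linarith
      · have h1 : lam ^ q * (1 / Φ' s ^ q) = (lam / Φ' s) ^ q := by
          rw [Real.div_rpow hlam0.le hsp.le]
          ring
        have h2 : (1:ℝ) ≤ (lam / Φ' s) ^ q :=
          Real.one_le_rpow ((one_le_div hsp).2 h.le) hq.le
        have h3 : 0 ≤ Φ' s / lam := div_nonneg hsp.le hlam0.le
        rw [h1]; linarith
    -- integral comparison
    have hsum_int : IntegrableOn (fun s => Φ' s / lam + lam ^ q * (1 / Φ' s ^ q))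
        (Set.Ioc x y) := by
      exact (hΦ'int.div_const lam).add (hgint.const_mul _)
    have hcomp : y - x ≤ ∫ s in Set.Ioc x y, (Φ' s / lam + lam ^ q * (1 / Φ' s ^ q)) := by
      have h1 : ∫ _ in Set.Ioc x y, (1:ℝ) = y - x := by
        rw [setIntegral_const, measureReal_def, Real.volume_Ioc, smul_eq_mul, mul_one,
          ENNReal.toReal_ofReal (by linarith : (0:ℝ) ≤ y - x)]
      calc y - x = ∫ _ in Set.Ioc x y, (1:ℝ) := h1.symm
        _ ≤ _ := setIntegral_mono_on
            (integrableOn_const measure_Ioc_lt_top.ne enorm_ne_top) hsum_int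
            measurableSet_Ioc hpt
    have hsplit : ∫ s in Set.Ioc x y, (Φ' s / lam + lam ^ q * (1 / Φ' s ^ q))
        = (∫ s in Set.Ioc x y, Φ' s) / lam
          + lam ^ q * ∫ s in Set.Ioc x y, 1 / Φ' s ^ q := by
      rw [integral_add (hΦ'int.div_const lam) (hgint.const_mul _),
        integral_div, integral_const_mul]
    have hsmall : ∫ s in Set.Ioc x y, 1 / Φ' s ^ q ≤ M := by
      apply setIntegral_mono_set hint
      · filter_upwards [ae_restrict_mem measurableSet_Ioc] with s hs
        exact hgnn s hs.1
      · exact Filter.Eventually.of_forall hsubset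
    -- rpow arithmetic
    have hdl : d / lam = d ^ (q / (q + 1)) := by
      have hexp : q / (q + 1) = 1 - 1 / (q + 1) := by field_simp; ring
      rw [hlam, hexp, Real.rpow_sub hd0, Real.rpow_one]
    have hlq : lam ^ q = d ^ (q / (q + 1)) := by
      rw [hlam, ← Real.rpow_mul hd0.le]
      congr 1
      field_simp
    have hfinal : y - x ≤ (1 + M) * d ^ (q / (q + 1)) := by
      have h3 := hcomp.trans (le_of_eq hsplit)
      rw [hFTC] at h3
      have h4 : lam ^ q * (∫ s in Set.Ioc x y, 1 / Φ' s ^ q) ≤ lam ^ q * M :=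
        mul_le_mul_of_nonneg_left hsmall (Real.rpow_nonneg hlam0.le q)
      have h5 : y - x ≤ d / lam + lam ^ q * M := by linarith
      rw [hdl, hlq] at h5
      have h6 : (1 + M) * d ^ (q / (q + 1))
          = d ^ (q / (q + 1)) + d ^ (q / (q + 1)) * M := by ring
      linarith
    calc Ψ a - Ψ b = y - x := rfl
      _ ≤ (1 + M) * d ^ (q / (q + 1)) := hfinal
  -- Ψ is monotone on [0, ∞)
  have hmonoΨ : ∀ u v : ℝ, 0 ≤ u → 0 ≤ v → u ≤ v → Ψ u ≤ Ψ v := by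
    intro u v hu hv huv
    obtain ⟨hu0, hΦu⟩ := hinv₂ u hu
    obtain ⟨hv0, hΦv⟩ := hinv₂ v hv
    by_contra h
    push_neg at h
    have := hmono (Set.mem_Ici.mpr hv0) (Set.mem_Ici.mpr hu0) h
    rw [hΦu, hΦv] at this; linarith
  -- symmetrize
  intro a ha b hb
  rcases le_total b a with h | h
  · have hkey := key a ha b hb h
    rw [abs_of_nonneg (sub_nonneg.2 (hmonoΨ b a hb.1 ha.1 h)),
      abs_of_nonneg (sub_nonneg.2 h)]
    exact hkey
  · have hkey := key b hb a ha h
    rw [abs_sub_comm (Ψ a), abs_sub_comm a,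
      abs_of_nonneg (sub_nonneg.2 (hmonoΨ a b ha.1 hb.1 h)),
      abs_of_nonneg (sub_nonneg.2 h)]
    exact hkey
end

section
/- (First alternative auxiliary estimate) Let Φ satisfy the standing assumptions and M > 0, and suppose 0 < k ≤ μ⁻ ≤ M. Then with θ_c := 1/Φ'(Φ⁻¹(c)), there is a constant C = C(Φ,M) > 1 such that θ_{μ⁻}/θ_{2μ⁻} = Φ'(Φ⁻¹(2μ⁻))/Φ'(Φ⁻¹(μ⁻)) ≤ Φ'(2·Φ⁻¹(μ⁻))/Φ'(Φ⁻¹(μ⁻)) ≤ C. -/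
/-!
Convexity and `Φ 0 = 0` make `Φ` superadditive, `2 Φ(s) ≤ Φ(2s)`, so `Φ⁻¹(2μ) ≤ 2 Φ⁻¹(μ)`;
since convexity also makes `Φ'` monotone, this is the first inequality. For the second, the
structural condition `s Φ''(s) ≤ C_Φ Φ'(s)` says exactly that `Φ'(s) / s ^ C_Φ` is antitone on
`(0, s₀]`, whence `Φ'(2s) ≤ 2 ^ C_Φ Φ'(s)` as long as `2s ≤ s₀`. On the remaining range
`s₀/2 < s ≤ Φ⁻¹(M)`, monotonicity of `Φ'` bounds `Φ'(2s) / Φ'(s)` by `Φ'(2 Φ⁻¹(M)) / Φ'(s₀/2)`.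
-/

open Set

section Doubling

variable {f f' : ℝ → ℝ} {c a : ℝ}

theorem antitoneOn_div_rpow_of_mul_deriv_le (hf : ∀ s ∈ Ioc 0 a, HasDerivAt f (f' s) s)
    (h : ∀ s ∈ Ioc 0 a, s * f' s ≤ c * f s) :
    AntitoneOn (fun s => f s / s ^ c) (Ioc 0 a) := by
  have hd : ∀ s ∈ Ioc 0 a, HasDerivAt (fun s => f s / s ^ c)
      ((f' s * s ^ c - f s * (c * s ^ (c - 1))) / (s ^ c) ^ 2) s := fun s hs =>
    (hf s hs).div (Real.hasDerivAt_rpow_const (Or.inl hs.1.ne'))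
      (Real.rpow_pos_of_pos hs.1 c).ne'
  refine antitoneOn_of_hasDerivWithinAt_nonpos (convex_Ioc 0 a)
    (fun s hs => (hd s hs).continuousAt.continuousWithinAt)
    (fun s hs => (hd s (interior_subset hs)).hasDerivWithinAt) fun s hs => ?_
  obtain ⟨hs0, hsa⟩ := interior_subset hs
  refine div_nonpos_of_nonpos_of_nonneg ?_ (sq_nonneg _)
  have hpow : s ^ c = s ^ (c - 1) * s := by rw [← Real.rpow_add_one hs0.ne', sub_add_cancel]
  rw [hpow]
  nlinarith [h s ⟨hs0, hsa⟩, Real.rpow_pos_of_pos hs0 (c - 1)]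

theorem le_two_rpow_mul_of_mul_deriv_le (hf : ∀ s ∈ Ioc 0 a, HasDerivAt f (f' s) s)
    (h : ∀ s ∈ Ioc 0 a, s * f' s ≤ c * f s) {s : ℝ} (hs : 0 < s) (h2s : 2 * s ≤ a) :
    f (2 * s) ≤ 2 ^ c * f s := by
  have key : f (2 * s) / (2 * s) ^ c ≤ f s / s ^ c :=
    antitoneOn_div_rpow_of_mul_deriv_le hf h ⟨hs, by linarith⟩ ⟨by linarith, h2s⟩ (by linarith)
  rwa [Real.mul_rpow zero_le_two hs.le, ← div_div,
    div_le_div_iff_of_pos_right (Real.rpow_pos_of_pos hs c),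
    div_le_iff₀' (Real.rpow_pos_of_pos two_pos c)] at key

end Doubling

theorem div_le_max_of_le_mul_of_monotoneOn {g : ℝ → ℝ} {K a b s : ℝ}
    (hmono : MonotoneOn g (Ioi 0)) (hpos : ∀ s, 0 < s → 0 < g s)
    (hdouble : ∀ s, 0 < s → 2 * s ≤ a → g (2 * s) ≤ K * g s) (ha : 0 < a) (hs : 0 < s)
    (hsb : s ≤ b) :
    g (2 * s) / g s ≤ max K (g (2 * b) / g (a / 2)) := by
  rcases le_or_gt (2 * s) a with h2s | h2s
  · exact ((div_le_iff₀ (hpos s hs)).2 (hdouble s hs h2s)).trans (le_max_left _ _)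
  · refine le_trans ?_ (le_max_right _ _)
    refine div_le_div₀ (hpos _ (by linarith)).le ?_ (hpos _ (by positivity)) ?_
    · exact hmono (mem_Ioi.2 (by positivity)) (mem_Ioi.2 (by linarith)) (by linarith)
    · exact hmono (mem_Ioi.2 (by positivity)) (mem_Ioi.2 hs) (by linarith)

theorem ConvexOn.apply_mul_le_mul_apply {f : ℝ → ℝ} (hf : ConvexOn ℝ (Ici 0) f) (h0 : f 0 ≤ 0)
    {t x : ℝ} (ht0 : 0 ≤ t) (ht1 : t ≤ 1) (hx : 0 ≤ x) : f (t * x) ≤ t * f x := by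
  have h := hf.2 (mem_Ici.2 hx) (mem_Ici.2 le_rfl) ht0 (sub_nonneg.2 ht1) (add_sub_cancel t 1)
  simp only [smul_eq_mul, mul_zero, add_zero] at h
  nlinarith

theorem StrictMonoOn.monotoneOn_of_rightInvOn {α β : Type*} [LinearOrder α] [Preorder β]
    {Φ : α → β} {Ψ : β → α} {s : Set α} {t : Set β} (hΦ : StrictMonoOn Φ s)
    (hΨ : MapsTo Ψ t s) (hinv : RightInvOn Ψ Φ t) : MonotoneOn Ψ t := fun μ hμ ν hν hμν => by
  rwa [← hΦ.le_iff_le (hΨ hμ) (hΨ hν), hinv hμ, hinv hν]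

theorem le_two_mul_of_rightInvOn {Φ Ψ : ℝ → ℝ} (hconv : ConvexOn ℝ (Ici 0) Φ) (h0 : Φ 0 ≤ 0)
    (hΦ : StrictMonoOn Φ (Ioi 0)) (hΨ : MapsTo Ψ (Ioi 0) (Ioi 0))
    (hinv : RightInvOn Ψ Φ (Ioi 0)) {μ : ℝ} (hμ : 0 < μ) : Ψ (2 * μ) ≤ 2 * Ψ μ := by
  have hΨμ : 0 < Ψ μ := hΨ hμ
  have h2μ : (0 : ℝ) < 2 * μ := by positivity
  have hsuper : 2 * Φ (Ψ μ) ≤ Φ (2 * Ψ μ) := by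
    have := hconv.apply_mul_le_mul_apply h0 (t := 1 / 2) (x := 2 * Ψ μ) (by norm_num)
      (by norm_num) (by positivity)
    rw [← mul_assoc, one_div_mul_cancel two_ne_zero, one_mul] at this
    linarith
  rw [← hΦ.le_iff_le (hΨ h2μ) (mem_Ioi.2 (by positivity)), hinv h2μ]
  rwa [hinv hμ] at hsuper

theorem stmt_17_general (Φ Φ' Φ'' Ψ : ℝ → ℝ) (C_Φ s₀ M : ℝ)
    (hΦ'd : ∀ s : ℝ, 0 < s → HasDerivAt Φ (Φ' s) s)
    (hΦ''d : ∀ s : ℝ, 0 < s → HasDerivAt Φ' (Φ'' s) s)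
    (hconv : ConvexOn ℝ (Set.Ici 0) Φ)
    (hΦ0 : Φ 0 = 0)
    (hΦ'pos : ∀ s : ℝ, 0 < s → 0 < Φ' s)
    (hs₀ : s₀ ∈ Set.Ioc (0:ℝ) 1)
    (hstruct : ∀ s ∈ Set.Ioc (0:ℝ) s₀, s * Φ'' s ≤ C_Φ * Φ' s)
    (hinv₂ : ∀ σ : ℝ, 0 ≤ σ → 0 ≤ Ψ σ ∧ Φ (Ψ σ) = σ) :
    ∃ C : ℝ, 1 < C ∧ ∀ μm k : ℝ, 0 < k → k ≤ μm → μm ≤ M →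
      (1 / Φ' (Ψ μm)) / (1 / Φ' (Ψ (2 * μm))) = Φ' (Ψ (2 * μm)) / Φ' (Ψ μm) ∧
      Φ' (Ψ (2 * μm)) / Φ' (Ψ μm) ≤ Φ' (2 * Ψ μm) / Φ' (Ψ μm) ∧
      Φ' (2 * Ψ μm) / Φ' (Ψ μm) ≤ C := by
  have hΦ'mono : MonotoneOn Φ' (Ioi 0) :=
    ((hconv.subset Ioi_subset_Ici_self (convex_Ioi 0)).monotoneOn_deriv
      fun s hs => (hΦ'd s hs).differentiableAt).congr fun s hs => (hΦ'd s hs).deriv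
  have hΦmono : StrictMonoOn Φ (Ioi 0) :=
    strictMonoOn_of_hasDerivWithinAt_pos (convex_Ioi 0)
      (fun s hs => (hΦ'd s hs).continuousAt.continuousWithinAt)
      (fun s hs => (hΦ'd s (interior_subset hs)).hasDerivWithinAt)
      fun s hs => hΦ'pos s (interior_subset hs)
  have hinv : RightInvOn Ψ Φ (Ioi 0) := fun σ hσ => (hinv₂ σ (le_of_lt hσ)).2
  have hΨ : MapsTo Ψ (Ioi 0) (Ioi 0) := fun σ (hσ : 0 < σ) =>
    (hinv₂ σ hσ.le).1.lt_of_ne fun h => by simpa [← h, hΦ0, hσ.ne] using hinv hσ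
  have hdouble : ∀ s, 0 < s → 2 * s ≤ s₀ → Φ' (2 * s) ≤ 2 ^ C_Φ * Φ' s := fun s =>
    le_two_rpow_mul_of_mul_deriv_le (fun s hs => hΦ''d s hs.1) hstruct
  refine ⟨max (2 ^ C_Φ) (Φ' (2 * Ψ M) / Φ' (s₀ / 2)) + 1,
    by linarith [le_max_left (2 ^ C_Φ) (Φ' (2 * Ψ M) / Φ' (s₀ / 2)),
      Real.rpow_pos_of_pos two_pos C_Φ], fun μ k hk hkμ hμM => ?_⟩
  have hμ : 0 < μ := hk.trans_le hkμ
  have hΨμ : 0 < Ψ μ := hΨ hμ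
  refine ⟨by rw [div_div_div_comm, div_one, one_div_div], ?_, ?_⟩
  · refine div_le_div_of_nonneg_right ?_ (hΦ'pos _ hΨμ).le
    exact hΦ'mono (hΨ (by positivity : (0 : ℝ) < 2 * μ)) (mem_Ioi.2 (by positivity))
      (le_two_mul_of_rightInvOn hconv hΦ0.le hΦmono hΨ hinv hμ)
  · have hΨM : Ψ μ ≤ Ψ M :=
      hΦmono.monotoneOn_of_rightInvOn hΨ hinv hμ (hμ.trans_le hμM) hμM
    linarith [div_le_max_of_le_mul_of_monotoneOn hΦ'mono hΦ'pos hdouble hs₀.1 hΨμ hΨM]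

/-- Auxiliary estimate from the first alternative: with `θ_c := 1/Φ'(Φ⁻¹(c))`,
for `0 < k ≤ μ⁻ ≤ M` one has
`θ_{μ⁻}/θ_{2μ⁻} = Φ'(Φ⁻¹(2μ⁻))/Φ'(Φ⁻¹(μ⁻)) ≤ Φ'(2Φ⁻¹(μ⁻))/Φ'(Φ⁻¹(μ⁻)) ≤ C`
with a constant `C = C(Φ,M) > 1`. -/
theorem stmt_17 (Φ Φ' Φ'' Ψ : ℝ → ℝ) (C_Φ s₀ M : ℝ)
    (hΦc : ContinuousOn Φ (Set.Ici 0))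
    (hΦ'd : ∀ s : ℝ, 0 < s → HasDerivAt Φ (Φ' s) s)
    (hΦ''d : ∀ s : ℝ, 0 < s → HasDerivAt Φ' (Φ'' s) s)
    (hΦ''c : ContinuousOn Φ'' (Set.Ioi 0))
    (hconv : ConvexOn ℝ (Set.Ici 0) Φ)
    (hΦ0 : Φ 0 = 0)
    (hΦ'pos : ∀ s : ℝ, 0 < s → 0 < Φ' s)
    (hCΦ : 0 < C_Φ) (hs₀ : s₀ ∈ Set.Ioc (0:ℝ) 1)
    (hstruct : ∀ s ∈ Set.Ioc (0:ℝ) s₀, s * Φ'' s ≤ C_Φ * Φ' s)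
    (hinv₁ : ∀ s : ℝ, 0 ≤ s → Ψ (Φ s) = s)
    (hinv₂ : ∀ σ : ℝ, 0 ≤ σ → 0 ≤ Ψ σ ∧ Φ (Ψ σ) = σ)
    (hM : 0 < M) :
    ∃ C : ℝ, 1 < C ∧ ∀ μm k : ℝ, 0 < k → k ≤ μm → μm ≤ M →
      (1 / Φ' (Ψ μm)) / (1 / Φ' (Ψ (2 * μm))) = Φ' (Ψ (2 * μm)) / Φ' (Ψ μm) ∧
      Φ' (Ψ (2 * μm)) / Φ' (Ψ μm) ≤ Φ' (2 * Ψ μm) / Φ' (Ψ μm) ∧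
      Φ' (2 * Ψ μm) / Φ' (Ψ μm) ≤ C :=
  stmt_17_general Φ Φ' Φ'' Ψ C_Φ s₀ M hΦ'd hΦ''d hconv hΦ0 hΦ'pos hs₀ hstruct hinv₂
end
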